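/- arXiv:math/0606653 — 2 statements merged into one kernel-verified Lean document; each statement's English description precedes it below -/
import Mathlib

section
/- Moore determinant identity: For independent variables x_1,...,x_n over F_q, the Moore determinant Moore(x_1,...,x_n) = det of the n×n matrix whose (i,j) entry is x_j^{q^{n-i}} equals the product over k=1,...,n of the products over all (a_{k+1},...,a_n) in F_q^{n-k} of (x_k + a_{k+1} x_{k+1} + ... + a_n x_n). -/
open Polynomial Matrix Finset

set_option linter.unusedSectionVars false
set_option maxHeartbeats 1000000

/-- The Moore determinant of `x_1, ..., x_n`: the determinant of the `n × n`
matrix whose `(i, j)` entry is `x_j ^ (q ^ (n - 1 - i))`, i.e. whose rows, from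
top to bottom, are `(x_1^{q^{n-1}}, ..., x_n^{q^{n-1}})`, ..., `(x_1, ..., x_n)`. -/
def moore {R : Type*} [CommRing R] (q : ℕ) {n : ℕ} (x : Fin n → R) : R :=
  Matrix.det (Matrix.of fun i j : Fin n => x j ^ q ^ (n - 1 - (i : ℕ)))

section Helpers
variable {F R : Type*} [Field F] [Fintype F] [CommRing R] [Nontrivial R] [Algebra F R]

lemma lincomb_pow (q : ℕ) (hq : Fintype.card F = q) {ι : Type*} [Fintype ι]
    (a : ι → F) (y : ι → R) (e : ℕ) :
    (∑ i, algebraMap F R (a i) * y i) ^ q ^ e =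
      ∑ i, algebraMap F R (a i) * y i ^ q ^ e := by
  obtain ⟨p, hp⟩ := CharP.exists F
  haveI := hp
  obtain ⟨m, hpm, hqm⟩ := FiniteField.card F p
  haveI : CharP R p := charP_of_injective_algebraMap' F p
  haveI : ExpChar R p := .prime hpm
  have hqe : q ^ e = p ^ (m * e) := by rw [← hq, hqm, pow_mul]
  rw [hqe, sum_pow_char_pow]
  refine Finset.sum_congr rfl fun i _ => ?_
  rw [mul_pow, ← map_pow, ← hqe, ← hq, FiniteField.pow_card_pow]

lemma lincomb_inj {ι : Type*} [Fintype ι] {y : ι → R}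
    (hy : LinearIndependent F y) :
    Function.Injective fun a : ι → F => ∑ i, algebraMap F R (a i) * y i := by
  intro a b h
  have h2 : ∑ i, (a - b) i • y i = 0 := by
    simp only [Pi.sub_apply, sub_smul, Finset.sum_sub_distrib]
    simp only [Algebra.smul_def] at *
    rw [h, sub_self]
  have := Fintype.linearIndependent_iff.mp hy (a - b) h2
  funext i
  simpa [sub_eq_zero] using this i

end Helpers

def e0 (n : ℕ) : Fin n ≃ {i : Fin (n + 1) // 0 < i} where
  toFun j := ⟨j.succ, j.succ_pos⟩
  invFun i := i.1.pred (Fin.pos_iff_ne_zero.mp i.2)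
  left_inv j := by simp
  right_inv i := by simp

def eSucc {n : ℕ} (k : Fin n) : {i : Fin n // k < i} ≃ {i : Fin (n + 1) // k.succ < i} where
  toFun i := ⟨i.1.succ, Fin.succ_lt_succ_iff.mpr i.2⟩
  invFun i := ⟨i.1.pred (Fin.pos_iff_ne_zero.mp (lt_of_le_of_lt (Fin.zero_le _) i.2)),
    by have := i.2; rw [Fin.lt_iff_val_lt_val] at *; simp only [Fin.val_succ, Fin.coe_pred] at *; omega⟩
  left_inv i := by ext; simp
  right_inv i := by ext; simp

section Main
variable {F R : Type*} [Field F] [Fintype F] [CommRing R] [IsDomain R] [Algebra F R]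

theorem moore_key (q : ℕ) (hq : Fintype.card F = q) :
    ∀ (n : ℕ) (x : Fin n → R), LinearIndependent F x →
      moore q x = ∏ k : Fin n, ∏ a : {i : Fin n // k < i} → F,
        (x k + ∑ i : {i : Fin n // k < i}, algebraMap F R (a i) * x i.1) := by
  intro n
  induction n with
  | zero => intro x _; simp [moore, Matrix.det_fin_zero]
  | succ n IH =>
    intro x hx
    have hq2 : 2 ≤ q := hq ▸ Fintype.one_lt_card
    set y : Fin n → R := x ∘ Fin.succ with hy_def
    have hy : LinearIndependent F y := hx.comp Fin.succ (Fin.succ_injective n)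
    set s : ({i : Fin (n + 1) // 0 < i} → F) → R :=
      fun a => ∑ i, algebraMap F R (a i) * x i.1 with hs_def
    set d : Fin (n + 1) → R := fun i =>
      Matrix.det (Matrix.of fun i' j' : Fin n =>
        x j'.succ ^ q ^ (n - (i.succAbove i' : ℕ))) with hd_def
    set f : R[X] := Matrix.det (Matrix.of fun i j : Fin (n + 1) =>
      if j = 0 then (X : R[X]) ^ q ^ (n - (i : ℕ)) else C (x j ^ q ^ (n - (i : ℕ)))) with hf_def
    -- Step 1: evaluation of f
    have heval : ∀ r : R, f.eval r = Matrix.det (Matrix.of fun i j : Fin (n + 1) =>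
        (if j = 0 then r else x j) ^ q ^ (n - (i : ℕ))) := by
      intro r
      rw [hf_def, show (Matrix.det (Matrix.of fun i j : Fin (n + 1) =>
        if j = 0 then (X : R[X]) ^ q ^ (n - (i : ℕ)) else C (x j ^ q ^ (n - (i : ℕ))))).eval r
        = (evalRingHom r) _ from rfl, RingHom.map_det]
      congr 1
      ext i j
      by_cases h : j = 0 <;> simp [h]
    -- Step 2
    have heval0 : f.eval (x 0) = moore q x := by
      rw [heval (x 0)]
      unfold moore
      congr 1
      ext i j
      by_cases h : j = 0 <;> simp [h, Nat.succ_sub_one]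
    -- Step 3: roots
    have hroot : ∀ a, f.eval (s a) = 0 := by
      intro a
      rw [heval (s a)]
      set B : Matrix (Fin (n + 1)) (Fin (n + 1)) R := Matrix.of fun i j : Fin (n + 1) =>
        (if j = 0 then s a else x j) ^ q ^ (n - (i : ℕ)) with hB_def
      set c : Fin (n + 1) → R := fun j =>
        if h : (0 : Fin (n + 1)) < j then algebraMap F R (a ⟨j, h⟩) else 0 with hc_def
      have hBcol : ∀ i : Fin (n + 1), B i 0 = ∑ j, c j • B i j := by
        intro i
        rw [Fin.sum_univ_succ]
        have hc0 : c 0 = 0 := by simp [hc_def]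
        rw [hc0, zero_smul, zero_add]
        have hB0 : B i 0 = (∑ t : {i : Fin (n + 1) // 0 < i}, algebraMap F R (a t) * x t.1)
            ^ q ^ (n - (i : ℕ)) := by simp [hB_def, hs_def]
        rw [hB0, lincomb_pow q hq]
        refine (Fintype.sum_equiv (e0 n) (fun j : Fin n => c j.succ • B i j.succ)
          (fun t => algebraMap F R (a t) * x t.1 ^ q ^ (n - (i : ℕ))) fun j => ?_).symm
        have h1 : (0 : Fin (n + 1)) < j.succ := j.succ_pos
        have h2 : (j.succ : Fin (n + 1)) ≠ 0 := Fin.succ_ne_zero j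
        simp [hc_def, hB_def, h1, h2, e0, smul_eq_mul]
      have hBup : B = B.updateCol 0 (fun i => ∑ j, c j • B i j) := by
        ext i j
        rw [Matrix.updateCol_apply]
        by_cases h : j = 0
        · rw [if_pos h, h, hBcol i]
        · rw [if_neg h]
      rw [hBup, Matrix.det_updateCol_sum]
      simp [hc_def]
    -- Step 4: Laplace
    have hminor : ∀ i : Fin (n + 1), ((Matrix.of fun i j : Fin (n + 1) =>
        if j = 0 then (X : R[X]) ^ q ^ (n - (i : ℕ)) else C (x j ^ q ^ (n - (i : ℕ)))).submatrix
          i.succAbove Fin.succ).det = C (d i) := by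
      intro i
      have : C (d i) = (C : R →+* R[X]) (Matrix.det (Matrix.of fun i' j' : Fin n =>
          x j'.succ ^ q ^ (n - (i.succAbove i' : ℕ)))) := rfl
      rw [this, RingHom.map_det]
      refine congrArg Matrix.det ?_
      ext i' j'
      have h2 : (j'.succ : Fin (n + 1)) ≠ 0 := Fin.succ_ne_zero j'
      simp [h2, RingHom.mapMatrix_apply]
    have hlap : f = ∑ i : Fin (n + 1), (-1) ^ (i : ℕ) * X ^ q ^ (n - (i : ℕ)) * C (d i) := by
      rw [hf_def, Matrix.det_succ_column_zero]
      refine Finset.sum_congr rfl fun i _ => ?_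
      rw [hminor i]
      simp
    have hd0 : d 0 = moore q y := by
      show (Matrix.of fun i' j' : Fin n =>
        x j'.succ ^ q ^ (n - (((0 : Fin (n + 1)).succAbove i' : ℕ)))).det = moore q y
      unfold moore
      refine congrArg Matrix.det ?_
      ext i j
      show x j.succ ^ q ^ (n - (((0 : Fin (n + 1)).succAbove i : ℕ))) = y j ^ q ^ (n - 1 - (i : ℕ))
      have h1 : (((0 : Fin (n + 1)).succAbove i : ℕ)) = (i : ℕ) + 1 := by simp [Fin.succAbove]
      rw [h1, show n - ((i : ℕ) + 1) = n - 1 - (i : ℕ) by omega]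
      rfl
    -- Step 5
    have hterm : ∀ i : Fin (n + 1), ((-1 : R[X]) ^ (i : ℕ) * X ^ q ^ (n - (i : ℕ)) * C (d i)).coeff (q ^ n)
        = if (i : ℕ) = 0 then d 0 else 0 := by
      intro i
      rw [coeff_mul_C, show ((-1 : R[X]) ^ (i : ℕ)) = C ((-1 : R) ^ (i : ℕ)) by simp,
        coeff_C_mul, coeff_X_pow]
      by_cases h : (i : ℕ) = 0
      · have : i = 0 := Fin.ext h
        simp [this]
      · have hlt : q ^ (n - (i : ℕ)) < q ^ n := by
          apply Nat.pow_lt_pow_right (by omega)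
          have := i.isLt
          omega
        rw [if_neg (by omega), if_neg h]
        ring
    have hcoeff : f.coeff (q ^ n) = d 0 := by
      rw [hlap, finset_sum_coeff]
      rw [Finset.sum_congr rfl fun i _ => hterm i]
      rw [Fin.sum_univ_succ]
      simp
    have hdeg : f.natDegree ≤ q ^ n := by
      rw [hlap]
      refine natDegree_sum_le_of_forall_le _ _ fun i _ => ?_
      refine le_trans (natDegree_mul_le) ?_
      rw [natDegree_C, add_zero]
      refine le_trans (natDegree_mul_le) ?_
      have h1 : ((-1 : R[X]) ^ (i : ℕ)).natDegree = 0 := by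
        rw [show ((-1 : R[X]) ^ (i : ℕ)) = C ((-1 : R) ^ (i : ℕ)) by simp, natDegree_C]
      rw [h1, zero_add]
      refine le_trans (natDegree_X_pow_le _) ?_
      exact Nat.pow_le_pow_right (by omega) (Nat.sub_le n i)
    -- Step 6
    have hcardT : Fintype.card ({i : Fin (n + 1) // 0 < i} → F) = q ^ n := by
      rw [Fintype.card_fun, ← Fintype.card_congr (e0 n), Fintype.card_fin, hq]
    set P : R[X] := ∏ a : {i : Fin (n + 1) // 0 < i} → F, (X - C (s a)) with hP_def
    have hPmonic : P.Monic := monic_prod_of_monic _ _ fun a _ => monic_X_sub_C (s a)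
    have hPdeg : P.natDegree = q ^ n := by
      rw [hP_def, natDegree_prod_of_monic _ _ fun a _ => monic_X_sub_C (s a)]
      simp [natDegree_X_sub_C, hcardT]
    -- Step 7
    have hsinj : Function.Injective s := by
      rw [hs_def]
      exact lincomb_inj (hx.comp Subtype.val Subtype.val_injective)
    have hfact : f = C (d 0) * P := by
      set g : R[X] := f - C (d 0) * P with hg_def
      have hgc : g.coeff (q ^ n) = 0 := by
        rw [hg_def, coeff_sub, coeff_C_mul, hcoeff, ← hPdeg, hPmonic.coeff_natDegree,
          mul_one, sub_self]
      have hgdeg : g.natDegree ≤ q ^ n := by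
        refine le_trans (natDegree_sub_le _ _) (max_le hdeg ?_)
        exact le_trans (natDegree_C_mul_le _ _) hPdeg.le
      have hgeval : ∀ a, g.eval (s a) = 0 := by
        intro a
        rw [hg_def, eval_sub, hroot a, eval_mul, eval_prod, zero_sub, neg_eq_zero]
        rw [Finset.prod_eq_zero (Finset.mem_univ a) (by simp), mul_zero]
      have hg0 : g = 0 := by
        by_contra hg
        have hne : g.natDegree ≠ q ^ n := by
          intro h
          exact hg (leadingCoeff_eq_zero.mp (by rw [leadingCoeff, h, hgc]))
        refine hg (Polynomial.eq_zero_of_natDegree_lt_card_of_eval_eq_zero g hsinj hgeval ?_)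
        rw [hcardT]
        omega
      rw [← sub_eq_zero, ← hg_def, hg0]
    -- Step 8
    rw [← heval0, hfact, eval_mul, eval_C, eval_prod]
    have hprodneg : ∏ a : {i : Fin (n + 1) // 0 < i} → F, ((X - C (s a)).eval (x 0))
        = ∏ a : {i : Fin (n + 1) // 0 < i} → F, (x 0 + s a) := by
      refine Fintype.prod_equiv (Equiv.neg _) _ _ fun a => ?_
      have : s (-a) = - s a := by
        rw [hs_def]
        simp [Finset.sum_neg_distrib, neg_mul]
      simp [this, sub_eq_add_neg]
    rw [hprodneg, Fin.prod_univ_succ]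
    have hhead : ∏ a : {i : Fin (n + 1) // 0 < i} → F,
        (x 0 + ∑ i : {i : Fin (n + 1) // 0 < i}, algebraMap F R (a i) * x i.1)
        = ∏ a : {i : Fin (n + 1) // 0 < i} → F, (x 0 + s a) := rfl
    rw [hhead]
    rw [mul_comm]
    congr 1
    rw [hd0, IH y hy]
    refine Finset.prod_congr rfl fun k _ => ?_
    refine Fintype.prod_equiv ((eSucc k).arrowCongr (Equiv.refl F)) _ _ fun b => ?_
    have hyk : y k = x k.succ := rfl
    rw [hyk]
    congr 1
    refine Fintype.sum_equiv (eSucc k) _ _ fun i => ?_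
    simp [Equiv.arrowCongr, eSucc, hy_def]

end Main

lemma linearIndependent_X (F : Type*) [Field F] (n : ℕ) :
    LinearIndependent F (fun j : Fin n => (MvPolynomial.X j : MvPolynomial (Fin n) F)) := by
  have h := (MvPolynomial.basisMonomials (Fin n) F).linearIndependent
  have h2 := h.comp (fun j : Fin n => Finsupp.single j 1)
    (Finsupp.single_left_injective one_ne_zero)
  exact h2

/-- **Moore determinant identity.**  For independent variables `x_1, ..., x_n` over
the finite field `F` with `q` elements,
`Moore(x_1, ..., x_n) = ∏_{k=1}^n ∏_{(a_{k+1},...,a_n) ∈ F^{n-k}}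
  (x_k + a_{k+1} x_{k+1} + ⋯ + a_n x_n)`. -/
theorem moore_determinant_identity (F : Type*) [Field F] [Fintype F]
    (q n : ℕ) (hq : Fintype.card F = q) :
    moore q (fun j : Fin n => (MvPolynomial.X j : MvPolynomial (Fin n) F)) =
      ∏ k : Fin n, ∏ a : {i : Fin n // k < i} → F,
        (MvPolynomial.X k +
          ∑ i : {i : Fin n // k < i}, MvPolynomial.C (a i) * MvPolynomial.X i.1) := by
  have := moore_key (R := MvPolynomial (Fin n) F) q hq n _ (linearIndependent_X F n)
  rw [this]
  simp only [MvPolynomial.algebraMap_eq]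
end

section
/- Product formula for nonzero elements: if y_1,...,y_n are elements of a field extension K of F_q that are F_q-linearly independent, then Moore(y_1,...,y_n) equals the product over k=1,...,n of the product over all tuples (a_{k+1},...,a_n) ∈ F_q^{n-k} of (y_k + a_{k+1} y_{k+1} + ... + a_n y_n), and in particular Moore(y_1,...,y_n) ≠ 0. -/
section MooreAux

open Polynomial Matrix


lemma pow_q_hom_exists (F : Type*) [Field F] [Fintype F] (q : ℕ) (hq : Fintype.card F = q)
    (K : Type*) [Field K] [Algebra F K] (m : ℕ) :
    ∃ φ : K →+* K, ∀ x : K, φ x = x ^ q ^ m := by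
  obtain ⟨p, hp⟩ := CharP.exists F
  obtain ⟨f, hpp, hcard⟩ := FiniteField.card F p
  haveI : CharP K p := charP_of_injective_algebraMap (algebraMap F K).injective p
  haveI : Fact p.Prime := ⟨hpp⟩
  haveI : ExpChar K p := ExpChar.prime hpp
  refine ⟨iterateFrobenius K p (f * m), fun x => ?_⟩
  rw [iterateFrobenius_def, pow_mul, ← hq, hcard]

variable {F : Type*} [Field F] [Fintype F] {K : Type*} [Field K] [Algebra F K]

lemma moore_peel (q : ℕ) (hq : Fintype.card F = q) (n : ℕ) (y : Fin (n + 1) → K)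
    (ht : LinearIndependent F (y ∘ Fin.succ)) (hd0 : moore q (y ∘ Fin.succ) ≠ 0) :
    moore q y =
      (∏ a : Fin n → F, (y 0 + ∑ j : Fin n, algebraMap F K (a j) * y j.succ)) *
        moore q (y ∘ Fin.succ) := by
  classical
  have hq2 : 2 ≤ q := hq ▸ Fintype.one_lt_card
  -- the matrix with first column replaced by powers of x
  set M : K → Matrix (Fin (n + 1)) (Fin (n + 1)) K :=
    fun x => Matrix.of fun i j : Fin (n + 1) => ((Fin.cons x (fun j' : Fin n => y j'.succ) : Fin (n + 1) → K) j) ^ q ^ (n - (i : ℕ))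
    with hM
  set d : Fin (n + 1) → K := fun i => ((M 0).submatrix i.succAbove Fin.succ).det with hd
  have hsub : ∀ (x : K) (i : Fin (n + 1)),
      (M x).submatrix i.succAbove Fin.succ = (M 0).submatrix i.succAbove Fin.succ := by
    intro x i
    funext i' j'
    simp [hM, Matrix.submatrix_apply, Fin.cons_succ]
  have hMoore : moore q y = (M (y 0)).det := by
    unfold moore
    congr 1
    funext i j
    rw [hM]
    simp only [Matrix.of_apply]
    rw [show (Fin.cons (y 0) (fun j' : Fin n => y j'.succ) : Fin (n + 1) → K) = y from
      Fin.cons_self_tail y]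
    rfl
  set P : K[X] := ∑ i : Fin (n + 1), C ((-1) ^ (i : ℕ) * d i) * X ^ q ^ (n - (i : ℕ)) with hP
  have hevalP : ∀ x : K, P.eval x = (M x).det := by
    intro x
    rw [Matrix.det_succ_column_zero]
    rw [hP]
    rw [eval_finset_sum]
    refine Finset.sum_congr rfl fun i _ => ?_
    rw [hsub x i]
    simp only [eval_mul, eval_C, eval_pow, eval_X, hM, Matrix.of_apply, Fin.cons_zero, ← hd]
    ring
  have hd0eq : d 0 = moore q (y ∘ Fin.succ) := by
    show ((M 0).submatrix (Fin.succAbove 0) Fin.succ).det = _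
    unfold moore
    congr 1
    funext i j
    simp only [hM, Matrix.submatrix_apply, Fin.succAbove_zero, Matrix.of_apply, Fin.cons_succ,
      Function.comp_apply, Fin.val_succ]
    rw [show n - ((i : ℕ) + 1) = n - 1 - (i : ℕ) from by omega]
  -- split off the top term
  set R : K[X] := ∑ i : Fin n, C ((-1) ^ ((i.succ : Fin (n + 1)) : ℕ) * d i.succ) *
      X ^ q ^ (n - ((i.succ : Fin (n + 1)) : ℕ)) with hR
  have hPsplit : P = C (d 0) * X ^ q ^ n + R := by
    rw [hP, Fin.sum_univ_succ, hR]
    congr 1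
    simp
  have hRdeg : R.degree < ((q ^ n : ℕ) : WithBot ℕ) := by
    refine lt_of_le_of_lt (degree_sum_le _ _) ?_
    rw [Finset.sup_lt_iff (by exact_mod_cast WithBot.bot_lt_coe (q ^ n : ℕ))]
    intro i _
    refine lt_of_le_of_lt (degree_C_mul_X_pow_le _ _) ?_
    have : q ^ (n - ((i.succ : Fin (n + 1)) : ℕ)) < q ^ n := by
      refine Nat.pow_lt_pow_right (by omega) ?_
      have := i.isLt
      simp only [Fin.val_succ]
      omega
    exact_mod_cast this
  have hd0' : d 0 ≠ 0 := by rw [hd0eq]; exact hd0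
  have hlead : (C (d 0) * X ^ q ^ n).degree = ((q ^ n : ℕ) : WithBot ℕ) := by
    exact degree_C_mul_X_pow _ hd0'
  have hPdeg : P.degree = ((q ^ n : ℕ) : WithBot ℕ) := by
    rw [hPsplit, degree_add_eq_left_of_degree_lt (by rw [hlead]; exact hRdeg), hlead]
  have hPlead : P.leadingCoeff = d 0 := by
    rw [hPsplit, leadingCoeff_add_of_degree_lt' (by rw [hlead]; exact hRdeg)]
    rw [leadingCoeff_mul, leadingCoeff_C, leadingCoeff_X_pow, mul_one]
  have hP0 : P ≠ 0 := by
    rw [← leadingCoeff_ne_zero, hPlead]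
    exact hd0'
  have hPnat : P.natDegree = q ^ n := natDegree_eq_of_degree_eq_some hPdeg
  -- the linear combinations of the tail
  set e : (Fin n → F) → K := fun a => ∑ j : Fin n, algebraMap F K (a j) * y j.succ with he
  have hinj : Function.Injective e := by
    intro a b hab
    have hsum : ∑ j : Fin n, (a j - b j) • (y ∘ Fin.succ) j = 0 := by
      simp only [Algebra.smul_def, Function.comp_apply, map_sub, sub_mul,
        Finset.sum_sub_distrib]
      rw [sub_eq_zero]
      exact hab
    have hz := Fintype.linearIndependent_iff.mp ht (fun j => a j - b j) hsum
    funext j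
    have := hz j
    rwa [sub_eq_zero] at this
  have hkey : ∀ (a : Fin n → F) (m : ℕ),
      (-(e a)) ^ q ^ m = -∑ j : Fin n, algebraMap F K (a j) * (y j.succ) ^ q ^ m := by
    intro a m
    obtain ⟨φ, hφ⟩ := pow_q_hom_exists F q hq K m
    calc (-(e a)) ^ q ^ m = φ (-(e a)) := (hφ _).symm
    _ = -∑ j : Fin n, φ (algebraMap F K (a j)) * φ (y j.succ) := by
        rw [map_neg, he]; simp only [_root_.map_sum, _root_.map_mul]
    _ = -∑ j : Fin n, algebraMap F K (a j) * (y j.succ) ^ q ^ m := by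
        congr 1
        refine Finset.sum_congr rfl fun j _ => ?_
        rw [hφ, hφ, ← map_pow]
        congr 2
        rw [← hq]
        exact FiniteField.pow_card_pow m (a j)
  have hroot : ∀ a : Fin n → F, P.eval (-(e a)) = 0 := by
    intro a
    rw [hevalP]
    rw [← Matrix.exists_mulVec_eq_zero_iff]
    refine ⟨(Fin.cons 1 (fun j => algebraMap F K (a j)) : Fin (n + 1) → K), ?_, ?_⟩
    · intro hv
      have := congrFun hv 0
      simp only [Fin.cons_zero, Pi.zero_apply] at this
      exact one_ne_zero this
    · funext i
      simp only [Matrix.mulVec, dotProduct, hM, Matrix.of_apply, Pi.zero_apply]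
      rw [Fin.sum_univ_succ]
      simp only [Fin.cons_zero, Fin.cons_succ]
      rw [hkey a (n - (i : ℕ))]
      rw [mul_one]
      rw [neg_add_eq_zero]
      refine Finset.sum_congr rfl fun j _ => ?_
      ring
  set S : Finset K := Finset.image (fun a : Fin n → F => -(e a)) Finset.univ with hS
  have hinjneg : Function.Injective (fun a : Fin n → F => -(e a)) := by
    intro a b hab
    exact hinj (neg_injective hab)
  have hScard : S.card = q ^ n := by
    rw [hS, Finset.card_image_of_injective _ hinjneg, Finset.card_univ, Fintype.card_fun,
      Fintype.card_fin, hq]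
  have hle : S.val ≤ P.roots := by
    refine Multiset.le_iff_count.mpr fun x => ?_
    by_cases hx : x ∈ S
    · rw [Multiset.count_eq_one_of_mem S.nodup hx]
      refine Multiset.one_le_count_iff_mem.mpr ?_
      rw [Polynomial.mem_roots hP0]
      obtain ⟨a, _, rfl⟩ := Finset.mem_image.mp hx
      exact hroot a
    · rw [Multiset.count_eq_zero_of_notMem hx]
      exact Nat.zero_le _
  have hrootsEq : P.roots = S.val := by
    refine (Multiset.eq_of_le_of_card_le hle ?_).symm
    calc Multiset.card P.roots ≤ P.natDegree := Polynomial.card_roots' P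
    _ = S.val.card := by rw [hPnat, ← hScard]; rfl
  have hcardroots : Multiset.card P.roots = P.natDegree := by
    rw [hrootsEq, hPnat]
    exact hScard
  have hsplits : Splits P := splits_iff_card_roots.mpr hcardroots
  have hfactor := hsplits.eq_prod_roots
  -- final computation
  rw [hMoore, ← hevalP, hfactor]
  rw [eval_mul, eval_C, hPlead, hrootsEq, eval_multiset_prod, Multiset.map_map]
  have : (S.val.map fun x => eval (y 0) (X - C x)).prod
      = ∏ a : Fin n → F, (y 0 + e a) := by
    show (∏ x ∈ S, eval (y 0) (X - C x)) = _
    rw [hS, Finset.prod_image (fun a _ b _ hab => hinjneg hab)]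
    refine Finset.prod_congr rfl fun a _ => ?_
    simp [sub_neg_eq_add]
  rw [show (eval (y 0) ∘ fun a : K => X - C a) = (fun x : K => eval (y 0) (X - C x)) from rfl,
    this, hd0eq, mul_comm]

def posEquiv (n : ℕ) : Fin n ≃ {i : Fin (n + 1) // 0 < i} where
  toFun j := ⟨j.succ, j.succ_pos⟩
  invFun i := ⟨(i.1 : ℕ) - 1, by
    have h1 := i.1.isLt
    have h2 := i.2
    rw [Fin.lt_def] at h2
    simp only [Fin.val_zero] at h2
    omega⟩
  left_inv j := by
    ext
    simp
  right_inv i := by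
    ext
    have h2 := i.2
    rw [Fin.lt_def] at h2
    simp only [Fin.val_zero] at h2
    simp only [Fin.val_succ]
    omega

def gtEquiv (n : ℕ) (k : Fin n) : {i : Fin n // k < i} ≃ {i : Fin (n + 1) // k.succ < i} where
  toFun i := ⟨i.1.succ, by rw [Fin.succ_lt_succ_iff]; exact i.2⟩
  invFun i := ⟨⟨(i.1 : ℕ) - 1, by
      have h1 := i.1.isLt
      omega⟩, by
    have h2 := i.2
    rw [Fin.lt_def] at h2 ⊢
    simp only [Fin.val_succ] at h2
    simpa using by omega⟩
  left_inv i := by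
    ext
    simp
  right_inv i := by
    ext
    have h2 := i.2
    rw [Fin.lt_def] at h2
    simp only [Fin.val_succ] at h2 ⊢
    omega

lemma moore_formula_aux (q : ℕ) (hq : Fintype.card F = q) :
    ∀ (n : ℕ) (y : Fin n → K), LinearIndependent F y →
      moore q y = (∏ k : Fin n, ∏ a : {i : Fin n // k < i} → F,
          (y k + ∑ i : {i : Fin n // k < i}, algebraMap F K (a i) * y i.1)) ∧
        moore q y ≠ 0 := by
  intro n
  induction n with
  | zero =>
    intro y h
    refine ⟨by simp [moore, Matrix.det_fin_zero], by simp [moore, Matrix.det_fin_zero]⟩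
  | succ n ih =>
    intro y h
    have ht : LinearIndependent F (y ∘ Fin.succ) := h.comp Fin.succ (Fin.succ_injective n)
    obtain ⟨ihEq, ihNe⟩ := ih (y ∘ Fin.succ) ht
    have peel := moore_peel q hq n y ht ihNe
    have hfac : ∀ a : Fin n → F, y 0 + ∑ j : Fin n, algebraMap F K (a j) * y j.succ ≠ 0 := by
      intro a h0
      have hz := Fintype.linearIndependent_iff.mp h (Fin.cons 1 a) ?_ 0
      · simp at hz
      · rw [Fin.sum_univ_succ]
        simp only [Fin.cons_zero, Fin.cons_succ, one_smul, Algebra.smul_def, _root_.map_one, one_mul]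
        exact h0
    have hprod_ne : (∏ a : Fin n → F, (y 0 + ∑ j : Fin n, algebraMap F K (a j) * y j.succ)) ≠ 0 :=
      Finset.prod_ne_zero_iff.mpr fun a _ => hfac a
    have hA : (∏ a : Fin n → F, (y 0 + ∑ j : Fin n, algebraMap F K (a j) * y j.succ))
        = ∏ a : {i : Fin (n + 1) // (0 : Fin (n + 1)) < i} → F,
            (y 0 + ∑ i : {i : Fin (n + 1) // (0 : Fin (n + 1)) < i},
              algebraMap F K (a i) * y i.1) := by
      refine Fintype.prod_equiv (Equiv.arrowCongr (posEquiv n) (Equiv.refl F)) _ _ fun a => ?_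
      congr 1
      refine Fintype.sum_equiv (posEquiv n) _ _ fun j => ?_
      simp [posEquiv, Equiv.arrowCongr]
    have hB : ∀ k : Fin n,
        (∏ a : {i : Fin n // k < i} → F,
          ((y ∘ Fin.succ) k + ∑ i : {i : Fin n // k < i},
            algebraMap F K (a i) * (y ∘ Fin.succ) i.1))
        = ∏ a : {i : Fin (n + 1) // k.succ < i} → F,
            (y k.succ + ∑ i : {i : Fin (n + 1) // k.succ < i},
              algebraMap F K (a i) * y i.1) := by
      intro k
      refine Fintype.prod_equiv (Equiv.arrowCongr (gtEquiv n k) (Equiv.refl F)) _ _ fun a => ?_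
      congr 1
      refine Fintype.sum_equiv (gtEquiv n k) _ _ fun j => ?_
      simp [gtEquiv, Equiv.arrowCongr]
    constructor
    · rw [peel, ihEq, Fin.prod_univ_succ]
      congr 1
      exact Finset.prod_congr rfl fun k _ => hB k
    · rw [peel]
      exact mul_ne_zero hprod_ne ihNe

end MooreAux

/-- **Product formula for the Moore determinant at linearly independent elements.**
If `y_1, ..., y_n` are elements of a field extension `K` of `F_q` that are
`F_q`-linearly independent, then
`Moore(y_1, ..., y_n) = ∏_{k=1}^n ∏_{(a_{k+1},...,a_n) ∈ F_q^{n-k}}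
  (y_k + a_{k+1} y_{k+1} + ⋯ + a_n y_n)`,
and in particular `Moore(y_1, ..., y_n) ≠ 0`. -/
theorem moore_prod_formula_of_linearIndependent (F : Type*) [Field F] [Fintype F]
    (q : ℕ) (hq : Fintype.card F = q)
    (K : Type*) [Field K] [Algebra F K]
    (n : ℕ) (y : Fin n → K) (h : LinearIndependent F y) :
    moore q y =
      (∏ k : Fin n, ∏ a : {i : Fin n // k < i} → F,
        (y k + ∑ i : {i : Fin n // k < i}, algebraMap F K (a i) * y i.1)) ∧
      moore q y ≠ 0 :=
  moore_formula_aux q hq n y h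
end
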